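/- Let n₁ be a nonzero integer. Define r⁰⁰(z) = z·(−512z⁴ + 48z² − 15), r⁰¹(z) = r¹⁰(z) = −(128z⁴ + 12z² + 15), and r¹¹(z) = (512z⁶ + 16z⁴ + 33z² − 15)/z. Then the function f(y) = (32π·σ₂(|n₁|)²/(315·|n₁|³)) · ∑_{i,j ∈ {0,1}} r^{ij}(π|n₁|y)·K_i(2π|n₁|y)·K_j(2π|n₁|y) satisfies y²·f''(y) − 12·f(y) = −64π²·y·(σ₂(|n₁|)²/n₁²)·K₁(2π|n₁|y)² for all y > 0. -/

import Mathlib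

/-!
Differentiating under the integral sign gives `K₀' = -K₁`, and integrating
`(e^{-x cosh t} sinh t)' = e^{-x cosh t} (cosh t - x cosh² t + x)` over `(0, ∞)` gives
`K₁' = -K₀ - K₁ / x`. Hence the derivative of a quadratic form
`a(z) K₀(2z)² + b(z) K₀(2z) K₁(2z) + d(z) K₁(2z)²` is again such a form, whose coefficients are
computed from `a, b, d` and their derivatives. With `z = π |n₁| y`, `fPdiag n₁` is a constant
multiple of `gDiag z`, the form with coefficients `r⁰⁰, 2 r⁰¹, r¹¹`; differentiating twice reduces
the equation to `z² gDiag'' - 12 gDiag = -630 z K₁(2z)²`, an identity between rational functions.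
-/

open Real

/-- Modified Bessel function `K₀`. -/
noncomputable def K0 (x : ℝ) : ℝ := ∫ t in Set.Ioi (0 : ℝ), Real.exp (-x * Real.cosh t)

/-- Modified Bessel function `K₁`. -/
noncomputable def K1 (x : ℝ) : ℝ :=
  ∫ t in Set.Ioi (0 : ℝ), Real.exp (-x * Real.cosh t) * Real.cosh t

/-- Divisor sum `σ₂(m) = ∑_{d ∣ m} d²`. -/
def sigma2 (m : ℕ) : ℕ := ∑ d ∈ m.divisors, d ^ 2

/-- The coefficient `r⁰⁰`. -/
noncomputable def r00 (z : ℝ) : ℝ := z * (-512 * z ^ 4 + 48 * z ^ 2 - 15)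

/-- The coefficient `r⁰¹ = r¹⁰`. -/
noncomputable def r01 (z : ℝ) : ℝ := -(128 * z ^ 4 + 12 * z ^ 2 + 15)

/-- The coefficient `r¹¹`. -/
noncomputable def r11 (z : ℝ) : ℝ := (512 * z ^ 6 + 16 * z ^ 4 + 33 * z ^ 2 - 15) / z

/-- The particular solution `f̂^P_{n₁,-n₁}`. -/
noncomputable def fPdiag (n₁ : ℤ) (y : ℝ) : ℝ :=
  32 * π * (sigma2 n₁.natAbs : ℝ) ^ 2 / (315 * |(n₁ : ℝ)| ^ 3) *
    (r00 (π * |(n₁ : ℝ)| * y) * K0 (2 * π * |(n₁ : ℝ)| * y) * K0 (2 * π * |(n₁ : ℝ)| * y) +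
      r01 (π * |(n₁ : ℝ)| * y) * K0 (2 * π * |(n₁ : ℝ)| * y) * K1 (2 * π * |(n₁ : ℝ)| * y) +
      r01 (π * |(n₁ : ℝ)| * y) * K1 (2 * π * |(n₁ : ℝ)| * y) * K0 (2 * π * |(n₁ : ℝ)| * y) +
      r11 (π * |(n₁ : ℝ)| * y) * K1 (2 * π * |(n₁ : ℝ)| * y) * K1 (2 * π * |(n₁ : ℝ)| * y))

open MeasureTheory Set Filter Topology
open scoped Nat

noncomputable def coshMoment (k : ℕ) (x : ℝ) : ℝ :=
  ∫ t in Ioi (0 : ℝ), exp (-x * cosh t) * cosh t ^ k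

lemma coshMoment_zero : coshMoment 0 = K0 := by
  ext x; simp [coshMoment, K0]

lemma coshMoment_one : coshMoment 1 = K1 := by
  ext x; simp [coshMoment, K1]

lemma cosh_pow_mul_exp_neg_le (k : ℕ) {b t : ℝ} (hb : 0 < b) (ht : 0 ≤ t) :
    cosh t ^ k * exp (-b * cosh t) ≤ k ! * (2 / b) ^ k * exp (-(b / 2) * t) := by
  have hpow : (b / 2 * cosh t) ^ k ≤ k ! * exp (b / 2 * cosh t) :=
    (div_le_iff₀' (by positivity)).mp (pow_div_factorial_le_exp _ (by positivity) k)
  have ht_le : t ≤ cosh t := (self_le_sinh_iff.mpr ht).trans (sinh_lt_cosh t).le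
  calc cosh t ^ k * exp (-b * cosh t)
      = (2 / b) ^ k * (b / 2 * cosh t) ^ k * exp (-b * cosh t) := by
        rw [← mul_pow]; field_simp
    _ ≤ (2 / b) ^ k * (k ! * exp (b / 2 * cosh t)) * exp (-b * cosh t) := by gcongr
    _ = k ! * (2 / b) ^ k * exp (-(b / 2) * cosh t) := by
        rw [mul_assoc, mul_assoc, ← exp_add]; ring_nf
    _ ≤ k ! * (2 / b) ^ k * exp (-(b / 2) * t) := by
        gcongr k ! * (2 / b) ^ k * exp ?_; nlinarith

lemma integrableOn_exp_neg_mul_cosh_mul_cosh_pow (k : ℕ) {x : ℝ} (hx : 0 < x) :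
    IntegrableOn (fun t => exp (-x * cosh t) * cosh t ^ k) (Ioi 0) := by
  refine ((exp_neg_integrableOn_Ioi 0 (half_pos hx)).const_mul (k ! * (2 / x) ^ k)).mono'
    (by fun_prop) ((ae_restrict_iff' measurableSet_Ioi).mpr (ae_of_all _ fun t ht => ?_))
  rw [norm_of_nonneg (by positivity), mul_comm]
  exact cosh_pow_mul_exp_neg_le k hx (le_of_lt ht)

lemma hasDerivAt_coshMoment (k : ℕ) {x : ℝ} (hx : 0 < x) :
    HasDerivAt (coshMoment k) (-coshMoment (k + 1) x) x := by
  have hball : ∀ z ∈ Metric.ball x (x / 2), x / 2 < z := fun z hz => by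
    rw [Metric.mem_ball, Real.dist_eq, abs_sub_lt_iff] at hz; linarith
  have hdom := hasDerivAt_integral_of_dominated_loc_of_deriv_le
    (μ := volume.restrict (Ioi (0 : ℝ)))
    (F := fun z t => exp (-z * cosh t) * cosh t ^ k)
    (F' := fun z t => -(exp (-z * cosh t) * cosh t ^ (k + 1)))
    (bound := fun t => (k + 1)! * (2 / (x / 2)) ^ (k + 1) * exp (-(x / 2 / 2) * t))
    (Metric.ball_mem_nhds x (half_pos hx)) (.of_forall fun _ => by fun_prop)
    (integrableOn_exp_neg_mul_cosh_mul_cosh_pow k hx) (by fun_prop) ?_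
    ((exp_neg_integrableOn_Ioi 0 (by positivity)).const_mul _) ?_
  · rw [integral_neg] at hdom
    exact hdom.2
  · refine (ae_restrict_iff' measurableSet_Ioi).mpr (ae_of_all _ fun t ht z hz => ?_)
    rw [norm_neg, norm_of_nonneg (by positivity), mul_comm]
    calc cosh t ^ (k + 1) * exp (-z * cosh t)
        ≤ cosh t ^ (k + 1) * exp (-(x / 2) * cosh t) := by
          gcongr; nlinarith [hball z hz, one_le_cosh t]
      _ ≤ _ := cosh_pow_mul_exp_neg_le (k + 1) (half_pos hx) (le_of_lt ht)
  · exact ae_of_all _ fun t z _ =>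
      ((((hasDerivAt_neg z).mul_const (cosh t)).exp).mul_const (cosh t ^ k)).congr_deriv
        (by ring)

lemma coshMoment_two {x : ℝ} (hx : 0 < x) :
    x * coshMoment 2 x = x * coshMoment 0 x + coshMoment 1 x := by
  have hint k := integrableOn_exp_neg_mul_cosh_mul_cosh_pow k hx
  have hderiv t : HasDerivAt (fun t => exp (-x * cosh t) * sinh t)
      (exp (-x * cosh t) * cosh t ^ 1 - x * (exp (-x * cosh t) * cosh t ^ 2)
        + x * (exp (-x * cosh t) * cosh t ^ 0)) t :=
    ((((hasDerivAt_cosh t).const_mul (-x)).exp).mul (hasDerivAt_sinh t)).congr_deriv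
      (by linear_combination x * exp (-x * cosh t) * cosh_sq_sub_sinh_sq t)
  have hint_deriv := ((hint 1).sub ((hint 2).const_mul x)).add ((hint 0).const_mul x)
  have hlim : Tendsto (fun t => exp (-x * cosh t) * sinh t) atTop (𝓝 0) := by
    refine tendsto_zero_of_hasDerivAt_of_integrableOn_Ioi (a := 0) (fun t _ => hderiv t) hint_deriv
      ((hint 1).mono' (by fun_prop) ((ae_restrict_iff' measurableSet_Ioi).mpr
        (ae_of_all _ fun t ht => ?_)))
    rw [norm_mul, norm_of_nonneg (exp_pos _).le, pow_one]
    gcongr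
    rw [norm_of_nonneg (sinh_nonneg_iff.mpr (le_of_lt ht))]
    exact (sinh_lt_cosh t).le
  have hparts := integral_Ioi_of_hasDerivAt_of_tendsto' (fun t _ => hderiv t) hint_deriv hlim
  rw [integral_add (by exact (hint 1).sub ((hint 2).const_mul x)) (by exact (hint 0).const_mul x),
    integral_sub (hint 1) ((hint 2).const_mul x), integral_const_mul, integral_const_mul,
    sinh_zero, mul_zero, sub_zero] at hparts
  simp only [coshMoment]
  linarith

lemma hasDerivAt_K0 {x : ℝ} (hx : 0 < x) : HasDerivAt K0 (-K1 x) x := by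
  simpa only [zero_add, coshMoment_zero, coshMoment_one] using hasDerivAt_coshMoment 0 hx

lemma hasDerivAt_K1 {x : ℝ} (hx : 0 < x) : HasDerivAt K1 (-K0 x - K1 x / x) x := by
  have h := coshMoment_two hx
  rw [coshMoment_zero, coshMoment_one] at h
  refine (coshMoment_one ▸ hasDerivAt_coshMoment 1 hx).congr_deriv ?_
  field_simp
  linarith

noncomputable def besselQuadForm (a b d : ℝ → ℝ) (z : ℝ) : ℝ :=
  a z * K0 (2 * z) ^ 2 + b z * (K0 (2 * z) * K1 (2 * z)) + d z * K1 (2 * z) ^ 2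

lemma hasDerivAt_besselQuadForm {a b d : ℝ → ℝ} {a' b' d' z : ℝ} (hz : 0 < z)
    (ha : HasDerivAt a a' z) (hb : HasDerivAt b b' z) (hd : HasDerivAt d d' z) :
    HasDerivAt (besselQuadForm a b d)
      ((a' - 2 * b z) * K0 (2 * z) ^ 2
        + (b' - 4 * a z - b z / z - 4 * d z) * (K0 (2 * z) * K1 (2 * z))
        + (d' - 2 * b z - 2 * d z / z) * K1 (2 * z) ^ 2) z := by
  have h2z : 0 < 2 * z := by positivity
  have hu : HasDerivAt (fun t => K0 (2 * t)) (-2 * K1 (2 * z)) z :=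
    ((hasDerivAt_K0 h2z).comp z ((hasDerivAt_id' z).const_mul 2)).congr_deriv (by ring)
  have hv : HasDerivAt (fun t => K1 (2 * t)) (-2 * K0 (2 * z) - K1 (2 * z) / z) z :=
    ((hasDerivAt_K1 h2z).comp z ((hasDerivAt_id' z).const_mul 2)).congr_deriv
      (by field_simp)
  refine (((ha.mul (hu.pow 2)).add (hb.mul (hu.mul hv))).add (hd.mul (hv.pow 2))).congr_deriv ?_
  simp only [Pi.mul_apply, Pi.pow_apply]
  field_simp
  ring

lemma hasDerivAt_r00 (z : ℝ) : HasDerivAt r00 (-2560 * z ^ 4 + 144 * z ^ 2 - 15) z :=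
  ((hasDerivAt_id' z).mul ((((hasDerivAt_pow 4 z).const_mul (-512)).add
    ((hasDerivAt_pow 2 z).const_mul 48)).sub_const 15)).congr_deriv (by norm_num; ring)

lemma hasDerivAt_two_mul_r01 (z : ℝ) :
    HasDerivAt (fun z => 2 * r01 z) (-1024 * z ^ 3 - 48 * z) z :=
  (((((hasDerivAt_pow 4 z).const_mul 128).add ((hasDerivAt_pow 2 z).const_mul 12)).add_const
    15).neg.const_mul 2).congr_deriv (by norm_num; ring)

lemma hasDerivAt_r11 {z : ℝ} (hz : z ≠ 0) :
    HasDerivAt r11 (2560 * z ^ 4 + 48 * z ^ 2 + 33 + 15 / z ^ 2) z := by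
  have hnum := ((((hasDerivAt_pow 6 z).const_mul 512).add ((hasDerivAt_pow 4 z).const_mul 16)).add
    ((hasDerivAt_pow 2 z).const_mul 33)).sub_const 15
  refine (hnum.div (hasDerivAt_id' z) hz).congr_deriv ?_
  simp only [Pi.add_apply]
  field_simp
  ring

noncomputable def gDiag : ℝ → ℝ := besselQuadForm r00 (fun z => 2 * r01 z) r11

noncomputable def gDiagDeriv : ℝ → ℝ :=
  besselQuadForm (fun z => -2048 * z ^ 4 + 192 * z ^ 2 + 45)
    (fun z => -1024 * z ^ 3 - 96 * z + 90 / z)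
    (fun z => 2048 * z ^ 4 + 64 * z ^ 2 + 27 + 45 / z ^ 2)

lemma hasDerivAt_gDiag {z : ℝ} (hz : 0 < z) : HasDerivAt gDiag (gDiagDeriv z) z := by
  refine (hasDerivAt_besselQuadForm hz (hasDerivAt_r00 z) (hasDerivAt_two_mul_r01 z)
    (hasDerivAt_r11 hz.ne')).congr_deriv ?_
  simp only [gDiagDeriv, besselQuadForm, r00, r01, r11]
  field_simp
  ring

lemma hasDerivAt_gDiagDeriv {z : ℝ} (hz : 0 < z) :
    HasDerivAt gDiagDeriv
      (besselQuadForm (fun z => -6144 * z ^ 3 + 576 * z - 180 / z)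
        (fun z => -3072 * z ^ 2 - 288 - 360 / z ^ 2)
        (fun z => 6144 * z ^ 3 + 192 * z - 234 / z - 180 / z ^ 3) z) z := by
  have hA := (((hasDerivAt_pow 4 z).const_mul (-2048)).add
    ((hasDerivAt_pow 2 z).const_mul 192)).add_const 45
  have hB := (((hasDerivAt_pow 3 z).const_mul (-1024)).sub ((hasDerivAt_id' z).const_mul 96)).add
    ((hasDerivAt_const z 90).div (hasDerivAt_id' z) hz.ne')
  have hD := ((((hasDerivAt_pow 4 z).const_mul 2048).add
    ((hasDerivAt_pow 2 z).const_mul 64)).add_const 27).add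
    ((hasDerivAt_const z 45).div (hasDerivAt_pow 2 z) (pow_ne_zero 2 hz.ne'))
  refine (hasDerivAt_besselQuadForm hz hA hB hD).congr_deriv ?_
  simp only [besselQuadForm, Pi.add_apply, Pi.sub_apply, Pi.div_apply]
  field_simp
  ring

theorem gDiag_ode {z : ℝ} (hz : 0 < z) :
    z ^ 2 * deriv (deriv gDiag) z - 12 * gDiag z = -630 * z * K1 (2 * z) ^ 2 := by
  have hderiv : deriv gDiag =ᶠ[𝓝 z] gDiagDeriv := by
    filter_upwards [Ioi_mem_nhds hz] with t ht using (hasDerivAt_gDiag ht).deriv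
  rw [((hasDerivAt_gDiagDeriv hz).congr_of_eventuallyEq hderiv).deriv]
  simp only [gDiag, besselQuadForm, r00, r01, r11]
  field_simp
  ring

lemma deriv_deriv_const_mul_comp_mul (g : ℝ → ℝ) (C c y : ℝ) :
    deriv (deriv fun y => C * g (c * y)) y = C * c ^ 2 * deriv (deriv g) (c * y) := by
  have hcomp (h : ℝ → ℝ) (C : ℝ) :
      (deriv fun y => C * h (c * y)) = fun y => C * c * deriv h (c * y) := by
    ext y
    simp only [deriv_const_mul_field', deriv_comp_mul_left, smul_eq_mul, mul_assoc]
  rw [hcomp, hcomp]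
  ring

lemma fPdiag_eq (n₁ : ℤ) :
    fPdiag n₁ = fun y => 32 * π * (sigma2 n₁.natAbs : ℝ) ^ 2 / (315 * |(n₁ : ℝ)| ^ 3) *
      gDiag (π * |(n₁ : ℝ)| * y) := by
  ext y
  simp only [fPdiag, gDiag, besselQuadForm, ← mul_assoc]
  ring

theorem mode_diag_ode (n₁ : ℤ) (h₁ : n₁ ≠ 0) :
    ∀ y : ℝ, 0 < y →
      y ^ 2 * deriv (deriv (fPdiag n₁)) y - 12 * fPdiag n₁ y
      = -64 * π ^ 2 * y * ((sigma2 n₁.natAbs : ℝ) ^ 2 / (n₁ : ℝ) ^ 2) *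
          K1 (2 * π * |(n₁ : ℝ)| * y) ^ 2 := by
  intro y hy
  have hn : 0 < |(n₁ : ℝ)| := abs_pos.mpr (Int.cast_ne_zero.mpr h₁)
  have hode := gDiag_ode (mul_pos (mul_pos pi_pos hn) hy)
  rw [fPdiag_eq, deriv_deriv_const_mul_comp_mul, ← sq_abs (n₁ : ℝ),
    show 2 * π * |(n₁ : ℝ)| * y = 2 * (π * |(n₁ : ℝ)| * y) by ring]
  linear_combination (norm := skip)
    32 * π * (sigma2 n₁.natAbs : ℝ) ^ 2 / (315 * |(n₁ : ℝ)| ^ 3) * hode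
  field_simp
  ring
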